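/- arXiv:1304.4218 — 8 statements merged into one kernel-verified Lean document; each statement's English description precedes it below -/
import Mathlib

section
/- For any summable sequence x : ℕ → ℝ with infinitely many nonzero terms, the achievement set E(x) is a perfect set (it has no isolated points). -/
/-!
The achievement set is the image of the compact Cantor space `ℕ → Bool` under the continuous map
`B ↦ ∑' n, if B n then x n else 0`, hence closed. Adding `n` to, or removing it from, the index set
of a subsum moves it by exactly `|x n|`; since infinitely many `x n` are nonzero and `x n → 0`,
this produces other points of the achievement set arbitrarily close to any given one.
-/

open Set

/-- The achievement set of a sequence: all subsums. -/
noncomputable def achievementSet (x : ℕ → ℝ) : Set ℝ :=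
  {y | ∃ A : Set ℕ, y = ∑' n, A.indicator x n}

open Filter Function

lemma Set.indicator_insert_eq_update {ι M : Type*} [Zero M] [DecidableEq ι] (x : ι → M)
    (A : Set ι) (n : ι) : (insert n A).indicator x = update (A.indicator x) n (x n) := by
  ext i
  by_cases h : i = n
  · subst h; simp
  · rw [update_of_ne h]
    exact indicator_eq_indicator (by simp [h]) rfl

lemma HasSum.indicator_insert {ι G : Type*} [AddCommGroup G] [TopologicalSpace G]
    [IsTopologicalAddGroup G] {x : ι → G} {A : Set ι} {s : G} (h : HasSum (A.indicator x) s)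
    {n : ι} (hn : n ∉ A) : HasSum ((insert n A).indicator x) (x n + s) := by
  classical
  simpa [indicator_insert_eq_update, hn] using h.update n (x n)

lemma exists_ne_zero_norm_lt {ι E : Type*} [SeminormedAddCommGroup E] {x : ι → E}
    (hinf : {n | x n ≠ 0}.Infinite) (hx : Tendsto x cofinite (nhds 0)) {ε : ℝ} (hε : 0 < ε) :
    ∃ n, x n ≠ 0 ∧ ‖x n‖ < ε := by
  have hlarge : {n | ε ≤ ‖x n‖}.Finite := by
    simpa using hx.eventually (eventually_norm_sub_lt 0 hε)
  obtain ⟨n, hn0, hnε⟩ := (hinf.sdiff hlarge).nonempty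
  exact ⟨n, hn0, not_le.mp hnε⟩

lemma achievementSet_eq_range (x : ℕ → ℝ) :
    achievementSet x = range (fun B : ℕ → Bool => ∑' n, if B n then x n else 0) := by
  classical
  ext y
  constructor
  · rintro ⟨A, rfl⟩
    exact ⟨fun n => decide (n ∈ A), tsum_congr fun n => by simp [indicator_apply]⟩
  · rintro ⟨B, rfl⟩
    exact ⟨{n | B n}, tsum_congr fun n => by simp [indicator_apply]⟩

lemma isCompact_achievementSet {x : ℕ → ℝ} (hx : Summable x) : IsCompact (achievementSet x) := by
  rw [achievementSet_eq_range]
  refine isCompact_range (continuous_tsum (u := fun n => |x n|) (fun n => ?_) hx.abs fun n B => ?_)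
  · exact (continuous_of_discreteTopology (f := fun b : Bool => if b then x n else 0)).comp
      (continuous_apply n)
  · by_cases h : B n <;> simp [h]

lemma exists_mem_achievementSet_dist_eq {x : ℕ → ℝ} (hx : Summable x) {y : ℝ}
    (hy : y ∈ achievementSet x) (n : ℕ) : ∃ z ∈ achievementSet x, dist z y = |x n| := by
  obtain ⟨A, rfl⟩ := hy
  by_cases hn : n ∈ A
  · have hsum : ∑' i, A.indicator x i = x n + ∑' i, (A \ {n}).indicator x i := by
      have h := (hx.indicator (A \ {n})).hasSum.indicator_insert (n := n) (by simp)
      rw [insert_sdiff_singleton, insert_eq_of_mem hn] at h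
      exact h.tsum_eq
    refine ⟨_, ⟨A \ {n}, rfl⟩, ?_⟩
    rw [hsum, Real.dist_eq, sub_add_cancel_right, abs_neg]
  · refine ⟨_, ⟨insert n A, rfl⟩, ?_⟩
    rw [((hx.indicator A).hasSum.indicator_insert hn).tsum_eq, Real.dist_eq, add_sub_cancel_right]

theorem stmt3 (x : ℕ → ℝ) (hx : Summable x) (hinf : {n | x n ≠ 0}.Infinite) :
    Perfect (achievementSet x) := by
  refine ⟨(isCompact_achievementSet hx).isClosed, preperfect_iff_nhds.mpr fun y hy U hU => ?_⟩
  obtain ⟨ε, hε, hball⟩ := Metric.mem_nhds_iff.mp hU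
  obtain ⟨n, hn0, hnε⟩ := exists_ne_zero_norm_lt hinf hx.tendsto_cofinite_zero hε
  obtain ⟨z, hz, hzy⟩ := exists_mem_achievementSet_dist_eq hx hy n
  refine ⟨z, ⟨hball ?_, hz⟩, ?_⟩
  · rwa [Metric.mem_ball, hzy, ← Real.norm_eq_abs]
  · rw [← dist_ne_zero, hzy]
    exact abs_ne_zero.mpr hn0
end

section
/- Let x : ℕ → ℝ be a summable sequence of positive terms such that x(n) > Σ_{i>n} x(i) for all n. Then the achievement set E(x) is totally disconnected. -/
open Set

/-!
Encode a subset of `ℕ` by its indicator `σ : ℕ → Bool`; the subsum map `σ ↦ ∑ σₙ xₙ` is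
continuous on the Cantor space `ℕ → Bool` by uniform convergence. If every term exceeds the sum
of all later terms, two subsums first differing at index `n` are separated by `xₙ`, so the map is
strictly monotone for the lexicographic order, in particular injective. A continuous injection
of the compact Cantor space into `ℝ` is an embedding, so its range `E(x)` inherits total
disconnectedness.
-/

noncomputable def subsum {E : Type*} [AddCommMonoid E] [TopologicalSpace E] (x : ℕ → E)
    (σ : ℕ → Bool) : E :=
  ∑' n, if σ n then x n else 0

lemma norm_ite_le_norm {E : Type*} [SeminormedAddGroup E] (b : Bool) (v : E) :
    ‖if b then v else 0‖ ≤ ‖v‖ := by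
  cases b <;> simp

section Normed

variable {E : Type*} [NormedAddCommGroup E] [CompleteSpace E] {x : ℕ → E}

lemma summable_ite (hx : Summable fun n => ‖x n‖) (σ : ℕ → Bool) :
    Summable fun n => if σ n then x n else 0 :=
  hx.of_norm_bounded fun n => norm_ite_le_norm (σ n) (x n)

lemma continuous_subsum (hx : Summable fun n => ‖x n‖) : Continuous (subsum x) :=
  continuous_tsum
    (fun n => (continuous_of_discreteTopology (f := fun b : Bool => if b then x n else 0)).comp
      (continuous_apply n))
    hx fun n σ => norm_ite_le_norm (σ n) (x n)

end Normed

section Real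

variable {x : ℕ → ℝ}

lemma achievementSet_eq_range_subsum : achievementSet x = range (subsum x) := by
  classical
  ext y
  constructor
  · rintro ⟨A, rfl⟩
    refine ⟨fun n => decide (n ∈ A), tsum_congr fun n => ?_⟩
    by_cases h : n ∈ A <;> simp [h]
  · rintro ⟨σ, rfl⟩
    refine ⟨{n | σ n}, tsum_congr fun n => ?_⟩
    by_cases h : σ n <;> simp [h]

lemma subsum_eq_sum_range_add (hx : Summable x) (σ : ℕ → Bool) (n : ℕ) :
    subsum x σ = (∑ i ∈ Finset.range n, if σ i then x i else 0) + (if σ n then x n else 0)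
      + ∑' i, if σ (n + 1 + i) then x (n + 1 + i) else 0 := by
  rw [subsum, ← (summable_ite (summable_norm_iff.mpr hx) σ).sum_add_tsum_nat_add (n + 1),
    Finset.sum_range_succ]
  simp only [add_comm _ (n + 1)]

lemma subsum_lt_subsum (hx : Summable x) (hnonneg : ∀ n, 0 ≤ x n)
    (hfast : ∀ n, (∑' i, x (n + 1 + i)) < x n) {σ τ : ℕ → Bool} {n : ℕ}
    (hagree : ∀ i < n, σ i = τ i) (hσn : σ n = false) (hτn : τ n = true) :
    subsum x σ < subsum x τ := by
  have hprefix : (∑ i ∈ Finset.range n, if σ i then x i else 0)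
      = ∑ i ∈ Finset.range n, if τ i then x i else 0 :=
    Finset.sum_congr rfl fun i hi => by rw [hagree i (Finset.mem_range.mp hi)]
  have hσtail : (∑' i, if σ (n + 1 + i) then x (n + 1 + i) else 0) ≤ ∑' i, x (n + 1 + i) :=
    ((summable_ite (summable_norm_iff.mpr hx) σ).comp_injective
        (add_right_injective (n + 1))).tsum_le_tsum
      (fun i => by cases σ (n + 1 + i) <;> simp [hnonneg])
      ((summable_nat_add_iff (n + 1)).2 hx |>.congr fun i => by rw [add_comm])
  have hτtail : 0 ≤ ∑' i, if τ (n + 1 + i) then x (n + 1 + i) else 0 :=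
    tsum_nonneg fun i => by cases τ (n + 1 + i) <;> simp [hnonneg]
  rw [subsum_eq_sum_range_add hx _ n, subsum_eq_sum_range_add hx _ n, hσn, hτn, hprefix]
  simp only [Bool.false_eq_true, if_false, if_true]
  linarith [hfast n]

lemma strictMono_subsum_ofLex (hx : Summable x) (hnonneg : ∀ n, 0 ≤ x n)
    (hfast : ∀ n, (∑' i, x (n + 1 + i)) < x n) :
    StrictMono fun σ : Lex (ℕ → Bool) => subsum x (ofLex σ) :=
  fun _ _ ⟨_, hagree, hlt⟩ =>
    subsum_lt_subsum hx hnonneg hfast hagree (Bool.lt_iff.mp hlt).1 (Bool.lt_iff.mp hlt).2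

end Real

theorem stmt4 (x : ℕ → ℝ) (hpos : ∀ n, 0 < x n) (hx : Summable x)
    (hfast : ∀ n, (∑' i, x (n + 1 + i)) < x n) :
    IsTotallyDisconnected (achievementSet x) := by
  have hinj : Function.Injective (subsum x) :=
    (strictMono_subsum_ofLex hx (fun n => (hpos n).le) hfast).injective
  have hemb : Topology.IsEmbedding (subsum x) :=
    ((continuous_subsum (summable_norm_iff.mpr hx)).isClosedEmbedding hinj).isEmbedding
  rw [achievementSet_eq_range_subsum]
  exact hemb.isTotallyDisconnected_range.mpr inferInstance
end

section
/- Let x : ℕ → ℝ be a summable sequence of positive terms such that x(n) ≤ Σ_{i>n} x(i) for all n. Then the achievement set E(x) equals the closed interval [0, Σ_n x(n)]. -/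
open Set

/-!
Every `y ∈ [0, ∑ x]` is reached by the greedy algorithm: take `x n` whenever it does not
overshoot the remaining gap `y - greedy x y n`. The gap stays in `[0, ∑_{i ≥ n} x i]`: if `x n`
is taken the tail shrinks by exactly `x n`, and if it is skipped then the gap is below `x n`,
which the slow-decay condition bounds by the next tail. Since tails tend to `0`, the greedy sums tend to `y`.
-/

open Filter Topology

noncomputable def greedy (x : ℕ → ℝ) (y : ℝ) : ℕ → ℝ
  | 0 => 0
  | n + 1 => greedy x y n + if x n ≤ y - greedy x y n then x n else 0

def greedySet (x : ℕ → ℝ) (y : ℝ) : Set ℕ :=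
  {n | x n ≤ y - greedy x y n}

theorem achievementSet_subset_Icc {x : ℕ → ℝ} (hx0 : ∀ n, 0 ≤ x n) (hx : Summable x) :
    achievementSet x ⊆ Icc 0 (∑' n, x n) := by
  rintro _ ⟨A, rfl⟩
  have hind : ∀ n, 0 ≤ A.indicator x n := indicator_nonneg fun n _ => hx0 n
  exact ⟨tsum_nonneg hind,
    (hx.indicator A).tsum_le_tsum (indicator_le_self' fun n _ => hx0 n) hx⟩

section Greedy

variable {x : ℕ → ℝ} {y : ℝ}

theorem sum_range_indicator_greedySet (n : ℕ) :
    ∑ i ∈ Finset.range n, (greedySet x y).indicator x i = greedy x y n := by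
  induction n with
  | zero => rfl
  | succ n ih =>
    rw [Finset.sum_range_succ, ih, greedy]
    rfl

theorem greedy_le (hy : 0 ≤ y) (n : ℕ) : greedy x y n ≤ y := by
  induction n with
  | zero => exact hy
  | succ n ih =>
    rw [greedy]
    split_ifs <;> linarith

theorem tsum_nat_add_eq_add (hx : Summable x) (n : ℕ) :
    ∑' i, x (n + i) = x n + ∑' i, x (n + 1 + i) := by
  have htail : Summable fun i => x (n + i) := hx.comp_injective (add_right_injective n)
  rw [htail.tsum_eq_zero_add]
  simp only [add_zero, add_right_comm _ 1, add_assoc]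

theorem sub_greedy_le_tsum (hx : Summable x) (hslow : ∀ n, x n ≤ ∑' i, x (n + 1 + i))
    (hy : y ≤ ∑' n, x n) (n : ℕ) : y - greedy x y n ≤ ∑' i, x (n + i) := by
  induction n with
  | zero => simpa [greedy] using hy
  | succ n ih =>
    rw [greedy]
    split_ifs
    · linarith [tsum_nat_add_eq_add hx n]
    · linarith [hslow n]

theorem tendsto_greedy (hx : Summable x) (hslow : ∀ n, x n ≤ ∑' i, x (n + 1 + i))
    (hy0 : 0 ≤ y) (hy : y ≤ ∑' n, x n) : Tendsto (greedy x y) atTop (𝓝 y) := by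
  have htail : Tendsto (fun n => y - ∑' i, x (n + i)) atTop (𝓝 y) := by
    simpa only [add_comm, sub_zero] using tendsto_const_nhds.sub (tendsto_sum_nat_add x)
  refine tendsto_of_tendsto_of_tendsto_of_le_of_le htail tendsto_const_nhds (fun n => ?_)
    (greedy_le hy0)
  linarith [sub_greedy_le_tsum hx hslow hy n]

theorem Icc_subset_achievementSet (hx : Summable x)
    (hslow : ∀ n, x n ≤ ∑' i, x (n + 1 + i)) : Icc 0 (∑' n, x n) ⊆ achievementSet x := by
  rintro y ⟨hy0, hy⟩
  refine ⟨greedySet x y, tendsto_nhds_unique (tendsto_greedy hx hslow hy0 hy) ?_⟩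
  simpa only [sum_range_indicator_greedySet] using (hx.indicator (greedySet x y)).hasSum.tendsto_sum_nat

end Greedy

theorem stmt5 (x : ℕ → ℝ) (hpos : ∀ n, 0 < x n) (hx : Summable x)
    (hslow : ∀ n, x n ≤ ∑' i, x (n + 1 + i)) :
    achievementSet x = Set.Icc 0 (∑' n, x n) :=
  (achievementSet_subset_Icc (fun n => (hpos n).le) hx).antisymm
    (Icc_subset_achievementSet hx hslow)
end

section
/- Let x : ℕ → ℝ be a summable, eventually non-increasing sequence of positive terms such that x(n) > Σ_{i>n} x(i) for infinitely many n. Then the achievement set E(x) is not a finite union of closed intervals. -/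
/-!
Call `n` good if the tail `t n = ∑_{i > n} x i` is smaller than each of `x 0, …, x n`. Then every
subsum is either `≤ t n` or `≥ min_{m ≤ n} x m > t n`, so `t n ∈ E(x)` is the left end of a gap of
`E(x)`. Monotonicity from `N` on, `t n → 0` and the hypothesis on infinitely many `n` make
infinitely many indices good, and `t` is strictly decreasing, so `E(x)` has infinitely many points
with a gap on their right. In a union of closed intervals each such point is a right endpoint, so
there can be only finitely many.
-/

open Set Filter Topology

/-- A set is a finite union of closed intervals. -/
def IsFinUnionClosedIntervals (S : Set ℝ) : Prop :=
  ∃ (n : ℕ) (a b : Fin n → ℝ), S = ⋃ i, Set.Icc (a i) (b i)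

section UnionIcc

variable {α ι : Type*} [LinearOrder α] [TopologicalSpace α] [OrderTopology α] [DenselyOrdered α]

theorem mem_range_of_eventually_nhdsGT_notMem_iUnion_Icc {a b : ι → α} {t : α}
    (ht : t ∈ ⋃ i, Icc (a i) (b i)) (hgap : ∀ᶠ y in 𝓝[>] t, y ∉ ⋃ i, Icc (a i) (b i)) :
    t ∈ range b := by
  obtain ⟨i, hat, htb⟩ := mem_iUnion.1 ht
  refine ⟨i, (htb.antisymm (not_lt.1 fun hlt => ?_)).symm⟩
  have : (𝓝[>] t).NeBot := nhdsGT_neBot_of_exists_gt ⟨b i, hlt⟩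
  have hin : ∀ᶠ y in 𝓝[>] t, y ∈ ⋃ i, Icc (a i) (b i) :=
    mem_of_superset (Icc_mem_nhdsGT_of_mem ⟨hat, hlt⟩) (subset_iUnion (fun i => Icc (a i) (b i)) i)
  exact (hin.and hgap).exists.elim fun _ h => h.2 h.1

end UnionIcc

noncomputable def tailSum (x : ℕ → ℝ) (n : ℕ) : ℝ :=
  ∑' i, x (n + 1 + i)

section Tail

variable {x : ℕ → ℝ}

theorem tsum_indicator_Ioi (hx : Summable x) (n : ℕ) :
    ∑' k, (Ioi n).indicator x k = tailSum x n := by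
  rw [← (hx.indicator (Ioi n)).sum_add_tsum_nat_add (n + 1), tailSum,
    Finset.sum_eq_zero fun i hi => indicator_of_notMem (by simpa [Nat.lt_succ_iff] using hi) _,
    zero_add]
  exact tsum_congr fun i => by rw [indicator_of_mem (by simp; omega), add_comm]

theorem tailSum_mem_achievementSet (hx : Summable x) (n : ℕ) : tailSum x n ∈ achievementSet x :=
  ⟨Ioi n, (tsum_indicator_Ioi hx n).symm⟩

theorem tsum_indicator_le_tailSum (h0 : 0 ≤ x) (hx : Summable x) {A : Set ℕ} {n : ℕ}
    (hA : A ⊆ Ioi n) : ∑' k, A.indicator x k ≤ tailSum x n :=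
  tsum_indicator_Ioi hx n ▸ (hx.indicator A).tsum_mono (hx.indicator _)
    (indicator_le_indicator_of_subset hA h0)

theorem le_tsum_indicator (h0 : 0 ≤ x) (hx : Summable x) {A : Set ℕ} {m : ℕ} (hm : m ∈ A) :
    x m ≤ ∑' k, A.indicator x k :=
  indicator_of_mem hm x ▸ (hx.indicator A).le_tsum m fun j _ => indicator_nonneg (fun k _ => h0 k) j

theorem tailSum_eq_add (hx : Summable x) (n : ℕ) : tailSum x n = x (n + 1) + tailSum x (n + 1) := by
  have htail : Summable fun i => x (n + 1 + i) :=
    ((summable_nat_add_iff (n + 1)).2 hx).congr fun i => by rw [add_comm]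
  rw [tailSum, htail.tsum_eq_zero_add]
  exact congrArg₂ _ rfl (tsum_congr fun i => by ring_nf)

theorem strictAnti_tailSum (hpos : ∀ n, 0 < x n) (hx : Summable x) : StrictAnti (tailSum x) :=
  strictAnti_nat_of_succ_lt fun n => by linarith [tailSum_eq_add hx n, hpos (n + 1)]

theorem tendsto_tailSum (x : ℕ → ℝ) : Tendsto (tailSum x) atTop (𝓝 0) := by
  refine ((tendsto_sum_nat_add x).comp (tendsto_add_atTop_nat 1)).congr fun n => ?_
  exact tsum_congr fun i => by ring_nf

end Tail

/-- A subsum either avoids `{0, …, n}` and is at most the tail, or it is at least one of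
`x 0, …, x n`. -/
theorem eventually_nhdsGT_notMem_achievementSet {x : ℕ → ℝ} (h0 : 0 ≤ x) (hx : Summable x)
    {n : ℕ} (hn : ∀ m ≤ n, tailSum x n < x m) :
    ∀ᶠ y in 𝓝[>] tailSum x n, y ∉ achievementSet x := by
  have hbelow : ∀ᶠ y in 𝓝[>] tailSum x n, ∀ m ∈ Finset.Iic n, y < x m :=
    (Finset.Iic n).eventually_all.2 fun m hm =>
      mem_of_superset (Ioo_mem_nhdsGT (hn m (Finset.mem_Iic.1 hm))) fun _ hy => hy.2
  filter_upwards [self_mem_nhdsWithin, hbelow] with y hy hlt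
  rintro ⟨A, rfl⟩
  by_cases hA : A ⊆ Ioi n
  · exact (not_lt.2 (tsum_indicator_le_tailSum h0 hx hA)) hy
  · obtain ⟨m, hmA, hmn⟩ := not_subset.1 hA
    exact (not_lt.2 (le_tsum_indicator h0 hx hmA)) (hlt m (Finset.mem_Iic.2 (not_lt.1 hmn)))

theorem infinite_setOf_tailSum_lt {x : ℕ → ℝ} (hpos : ∀ n, 0 < x n)
    (hmono : ∃ N, ∀ n, N ≤ n → x (n + 1) ≤ x n) (hfast : ∀ N, ∃ n, N ≤ n ∧ tailSum x n < x n) :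
    {n | ∀ m ≤ n, tailSum x n < x m}.Infinite := by
  obtain ⟨N, hN⟩ := hmono
  have hanti : ∀ m n, N ≤ m → m ≤ n → x n ≤ x m := fun m n hm hmn =>
    antitoneOn_nat_Ici_of_succ_le hN hm (hm.trans hmn) hmn
  have hsmall : ∀ᶠ n in atTop, ∀ m ∈ Finset.range N, tailSum x n < x m :=
    (Finset.range N).eventually_all.2 fun m _ => (tendsto_tailSum x).eventually_lt_const (hpos m)
  refine Nat.frequently_atTop_iff_infinite.1
    (((frequently_atTop.2 hfast).and_eventually hsmall).mono ?_)
  rintro n ⟨hfast_n, hsmall_n⟩ m hmn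
  rcases lt_or_ge m N with hmN | hNm
  · exact hsmall_n m (Finset.mem_range.2 hmN)
  · exact hfast_n.trans_le (hanti m n hNm hmn)

theorem stmt6 (x : ℕ → ℝ) (hpos : ∀ n, 0 < x n) (hx : Summable x)
    (hmono : ∃ N, ∀ n, N ≤ n → x (n + 1) ≤ x n)
    (hfast : ∀ N, ∃ n, N ≤ n ∧ (∑' i, x (n + 1 + i)) < x n) :
    ¬ IsFinUnionClosedIntervals (achievementSet x) := by
  rintro ⟨k, a, b, hE⟩
  have hgood := infinite_setOf_tailSum_lt hpos hmono hfast
  refine (hgood.image (strictAnti_tailSum hpos hx).injective.injOn) ((finite_range b).subset ?_)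
  rintro _ ⟨n, hn, rfl⟩
  have hmem := tailSum_mem_achievementSet hx n
  have hgap := eventually_nhdsGT_notMem_achievementSet (fun k => (hpos k).le) hx hn
  rw [hE] at hmem hgap
  exact mem_range_of_eventually_nhdsGT_notMem_iUnion_Icc hmem hgap
end

section
/- Let k₁ ≥ … ≥ k_m be positive integers with K = Σ k_i and 0 < q < k_m/(K + k_m). Then the achievement set E(k₁,…,k_m; q) of the multigeometric sequence is not a finite union of closed intervals. -/
open Set

/-- The multigeometric sequence (k 0, …, k m ; q): term (j*(m+1)+r) is k r * q^j. -/
noncomputable def mgSeq (m : ℕ) (k : Fin (m + 1) → ℝ) (q : ℝ) (n : ℕ) : ℝ :=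
  k ⟨n % (m + 1), Nat.mod_lt _ (Nat.succ_pos m)⟩ * q ^ (n / (m + 1))


theorem IsFinUnionClosedIntervals.finite_leftIsolated {S : Set ℝ}
    (hS : IsFinUnionClosedIntervals S) : {x | x ∈ S ∧ ∃ c < x, Disjoint (Ioo c x) S}.Finite := by
  obtain ⟨n, a, b, rfl⟩ := hS
  refine (finite_range a).subset ?_
  rintro x ⟨hx, c, hcx, hgap⟩
  obtain ⟨i, hai, hxb⟩ := mem_iUnion.mp hx
  refine ⟨i, hai.eq_of_not_lt fun hlt => ?_⟩
  obtain ⟨y, hy, hyx⟩ := exists_between (max_lt hcx hlt)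
  exact hgap.ne_of_mem ⟨(le_max_left _ _).trans_lt hy, hyx⟩
    (mem_iUnion.mpr ⟨i, (le_max_right _ _).trans hy.le, hyx.le.trans hxb⟩) rfl

namespace achievementSet

theorem apply_mem (x : ℕ → ℝ) (n : ℕ) : x n ∈ achievementSet x :=
  ⟨{n}, by classical simp [indicator_singleton]⟩

/-- A subsum either contains a term `x n` with `n < N` or is bounded by the `N`-th tail. -/
theorem notMem_of_tail_lt {x : ℕ → ℝ} (hx0 : ∀ n, 0 ≤ x n) (hx : Summable x) {N : ℕ} {y : ℝ}
    (htail : ∑' n, x (n + N) < y) (hhead : ∀ n < N, y < x n) : y ∉ achievementSet x := by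
  rintro ⟨A, rfl⟩
  have hA0 : ∀ n, 0 ≤ A.indicator x n := fun n => indicator_nonneg (fun n _ => hx0 n) n
  have hAx : ∀ n, A.indicator x n ≤ x n := fun n => indicator_le_self' (fun n _ => hx0 n) n
  have hAsum : Summable (A.indicator x) := hx.indicator A
  by_cases hhit : ∃ n ∈ A, n < N
  · obtain ⟨n, hnA, hnN⟩ := hhit
    have := hAsum.le_tsum n fun j _ => hA0 j
    rw [indicator_of_mem hnA] at this
    exact (hhead n hnN).not_ge this
  · push Not at hhit
    have hhead0 : ∑ n ∈ Finset.range N, A.indicator x n = 0 :=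
      Finset.sum_eq_zero fun n hn =>
        indicator_of_notMem (fun hnA => (hhit n hnA).not_gt (Finset.mem_range.mp hn)) x
    rw [← hAsum.sum_add_tsum_nat_add N, hhead0, zero_add] at htail
    exact htail.not_ge (((summable_nat_add_iff N).mpr hAsum).tsum_le_tsum (fun n => hAx _)
      ((summable_nat_add_iff N).mpr hx))

end achievementSet

namespace mgSeq

variable {m : ℕ} {k : Fin (m + 1) → ℝ} {q : ℝ}

theorem eq_divModEquiv (n : ℕ) :
    mgSeq m k q n = q ^ (Nat.divModEquiv (m + 1) n).1 * k (Nat.divModEquiv (m + 1) n).2 := by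
  rw [mgSeq, mul_comm]
  congr 2

theorem hasSum (hq : |q| < 1) : HasSum (mgSeq m k q) ((∑ i, k i) / (1 - q)) := by
  have hprod : HasSum (fun p : ℕ × Fin (m + 1) => q ^ p.1 * k p.2) ((1 - q)⁻¹ * ∑ i, k i) :=
    (hasSum_geometric_of_abs_lt_one hq).mul (hasSum_fintype k) <|
      summable_mul_of_summable_norm (by simpa using summable_geometric_of_lt_one (abs_nonneg q) hq)
        Summable.of_finite
  rw [div_eq_inv_mul]
  rw [← (Nat.divModEquiv (m + 1)).hasSum_iff] at hprod
  exact hprod.congr_fun fun n => eq_divModEquiv n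

theorem apply_add_mul (n N : ℕ) : mgSeq m k q (n + (m + 1) * N) = q ^ N * mgSeq m k q n := by
  have hmod : (n + (m + 1) * N) % (m + 1) = n % (m + 1) := Nat.add_mul_mod_self_left n (m + 1) N
  have hdiv : (n + (m + 1) * N) / (m + 1) = n / (m + 1) + N :=
    Nat.add_mul_div_left n N (Nat.succ_pos m)
  simp only [mgSeq, hmod, hdiv, pow_add]
  ring

theorem tsum_add_mul (hq : |q| < 1) (N : ℕ) :
    ∑' n, mgSeq m k q (n + (m + 1) * N) = q ^ N * ((∑ i, k i) / (1 - q)) := by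
  simp_rw [apply_add_mul, tsum_mul_left, (hasSum hq).tsum_eq]

theorem last_mul_pow (j : ℕ) : mgSeq m k q (m + (m + 1) * j) = k (Fin.last m) * q ^ j := by
  rw [apply_add_mul, mgSeq, Nat.div_eq_of_lt m.lt_succ_self, pow_zero, mul_one, mul_comm]
  congr
  exact Nat.mod_eq_of_lt m.lt_succ_self

theorem last_mul_pow_le (hk : ∀ i, k (Fin.last m) ≤ k i) (hk0 : 0 ≤ k (Fin.last m))
    (hq0 : 0 ≤ q) (hq1 : q ≤ 1) {n j : ℕ} (hn : n < (m + 1) * (j + 1)) :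
    k (Fin.last m) * q ^ j ≤ mgSeq m k q n := by
  have hnj : n / (m + 1) ≤ j := Nat.lt_succ_iff.mp ((Nat.div_lt_iff_lt_mul m.succ_pos).mpr
    (by rwa [mul_comm] at hn))
  exact mul_le_mul (hk _) (pow_le_pow_of_le_one hq0 hq1 hnj) (pow_nonneg hq0 _)
    (hk0.trans (hk _))

theorem disjoint_Ioo_achievementSet (hk : ∀ i, k (Fin.last m) ≤ k i) (hk0 : 0 ≤ k (Fin.last m))
    (hq0 : 0 ≤ q) (hq1 : q < 1) (j : ℕ) :
    Disjoint (Ioo (q ^ (j + 1) * ((∑ i, k i) / (1 - q))) (k (Fin.last m) * q ^ j))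
      (achievementSet (mgSeq m k q)) := by
  have hq : |q| < 1 := by rwa [abs_of_nonneg hq0]
  refine disjoint_left.mpr fun y ⟨htail, hhead⟩ => achievementSet.notMem_of_tail_lt
    (fun n => ?_) (hasSum hq).summable (N := (m + 1) * (j + 1)) ?_ ?_
  · simp only [mgSeq]
    exact mul_nonneg (hk0.trans (hk _)) (pow_nonneg hq0 _)
  · rwa [tsum_add_mul hq]
  · exact fun n hn => hhead.trans_le (last_mul_pow_le hk hk0 hq0 hq1.le hn)

end mgSeq

theorem stmt8 (m : ℕ) (k : Fin (m + 1) → ℕ) (hpos : ∀ i, 0 < k i)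
    (hdec : ∀ i j : Fin (m + 1), i ≤ j → k j ≤ k i) (q : ℝ) (hq0 : 0 < q)
    (hq : q < (k (Fin.last m) : ℝ) / ((∑ i, k i : ℕ) + (k (Fin.last m) : ℕ))) :
    ¬ IsFinUnionClosedIntervals (achievementSet (mgSeq m (fun i => (k i : ℝ)) q)) := by
  intro hE
  set K : ℝ := ∑ i, (k i : ℝ)
  set d : ℝ := (k (Fin.last m) : ℝ)
  have hd : 0 < d := Nat.cast_pos.mpr (hpos _)
  have hdK : d ≤ K := Finset.single_le_sum (fun i _ => Nat.cast_nonneg (k i)) (Finset.mem_univ _)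
  rw [Nat.cast_sum, lt_div_iff₀ (by positivity)] at hq
  have hq1 : q < 1 := by nlinarith
  have hgap : q * (K / (1 - q)) < d := by
    rw [mul_div_assoc', div_lt_iff₀ (by linarith)]
    linarith
  have hinj : Function.Injective fun j : ℕ => d * q ^ j := fun i j hij =>
    (pow_right_injective₀ hq0 hq1.ne) (mul_left_cancel₀ hd.ne' hij)
  refine (infinite_range_of_injective hinj).mono ?_ hE.finite_leftIsolated
  rintro _ ⟨j, rfl⟩
  have hmem := achievementSet.apply_mem (mgSeq m (fun i => (k i : ℝ)) q) (m + (m + 1) * j)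
  rw [mgSeq.last_mul_pow] at hmem
  refine ⟨hmem, q ^ (j + 1) * (K / (1 - q)), ?_, mgSeq.disjoint_Ioo_achievementSet
      (fun i => by exact_mod_cast hdec i _ (Fin.le_last i)) hd.le hq0.le hq1 j⟩
  calc q ^ (j + 1) * (K / (1 - q)) = q ^ j * (q * (K / (1 - q))) := by ring
    _ < q ^ j * d := by gcongr
    _ = d * q ^ j := mul_comm _ _
end

section
/- Let k₁,…,k_m be positive integers, and suppose there exist positive integers n₀ and n such that each of n₀, n₀+1, …, n₀+n is expressible as Σ_{i=1}^m ε_i k_i with ε_i ∈ {0,1}. If 1/(n+1) ≤ q < 1/2, then the achievement set E(k₁,…,k_m; q) of the multigeometric sequence has nonempty interior. -/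
/-!
Grouping the terms of the sequence in blocks `k₀ q^j, …, k_m q^j`, the block `j` can contribute
`(n₀ + d) q^j` for every digit `d ∈ {0, …, n}`. Hence the achievement set contains
`n₀ / (1 - q) + {∑ d_j q^j : d_j ∈ {0, …, n}}`, and for `1 / (n + 1) ≤ q < 1` the greedy algorithm
expands every point of `[0, n / (1 - q)]` in base `1 / q` with digits in `{0, …, n}`.
-/

open Set

section GreedyExpansion

variable {n : ℕ} {q s x : ℝ}

noncomputable def greedyDigit (n : ℕ) (s : ℝ) : ℕ := min n ⌊s⌋₊

noncomputable def greedyRemainder (n : ℕ) (q x : ℝ) : ℕ → ℝ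
  | 0 => x
  | j + 1 => (greedyRemainder n q x j - greedyDigit n (greedyRemainder n q x j)) / q

theorem greedyDigit_le_self (hs : 0 ≤ s) : (greedyDigit n s : ℝ) ≤ s :=
  le_trans (by exact_mod_cast min_le_right n ⌊s⌋₊) (Nat.floor_le hs)

theorem sub_greedyDigit_le (hqn : 1 ≤ (n + 1) * q) (hq1 : q < 1)
    (hsM : s ≤ n / (1 - q)) : s - greedyDigit n s ≤ q * (n / (1 - q)) := by
  have h1q : 0 < 1 - q := by linarith
  have hM : q * (n / (1 - q)) = n / (1 - q) - n := by field_simp; ring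
  rw [hM]
  unfold greedyDigit
  rcases le_total n ⌊s⌋₊ with h | h
  · rw [min_eq_left h]
    linarith
  · -- the uncapped digit leaves a remainder below `1`, and `1 ≤ q n / (1 - q)` iff `1 ≤ (n + 1) q`
    rw [min_eq_right h]
    have hfloor : s < ⌊s⌋₊ + 1 := Nat.lt_floor_add_one s
    have hone : 1 ≤ n / (1 - q) - n := by
      rw [← hM, mul_div_assoc', le_div_iff₀ h1q]
      linarith
    linarith

theorem greedyRemainder_mem_Icc (hq0 : 0 < q) (hqn : 1 ≤ (n + 1) * q) (hq1 : q < 1)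
    (hx : x ∈ Icc 0 (n / (1 - q))) (j : ℕ) :
    greedyRemainder n q x j ∈ Icc 0 (n / (1 - q)) := by
  induction j with
  | zero => exact hx
  | succ j ih =>
    have hle := greedyDigit_le_self (n := n) ih.1
    have hsub := sub_greedyDigit_le hqn hq1 ih.2
    refine ⟨div_nonneg (by linarith) hq0.le, ?_⟩
    rw [greedyRemainder, div_le_iff₀ hq0]
    linarith

theorem sum_greedyDigit_add_remainder (hq0 : q ≠ 0) (J : ℕ) :
    ∑ j ∈ Finset.range J, (greedyDigit n (greedyRemainder n q x j) : ℝ) * q ^ j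
      + q ^ J * greedyRemainder n q x J = x := by
  induction J with
  | zero => simp [greedyRemainder]
  | succ J ih =>
    rw [Finset.sum_range_succ, greedyRemainder, pow_succ]
    field_simp
    linear_combination ih

theorem hasSum_greedyDigit (hq0 : 0 < q) (hqn : 1 ≤ (n + 1) * q) (hq1 : q < 1)
    (hx : x ∈ Icc 0 (n / (1 - q))) :
    HasSum (fun j => (greedyDigit n (greedyRemainder n q x j) : ℝ) * q ^ j) x := by
  have hr := greedyRemainder_mem_Icc hq0 hqn hq1 hx
  rw [hasSum_iff_tendsto_nat_of_nonneg (fun j => by positivity)]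
  have htail : Filter.Tendsto (fun J => q ^ J * greedyRemainder n q x J) Filter.atTop
      (nhds 0) := by
    refine squeeze_zero (fun J => mul_nonneg (pow_nonneg hq0.le J) (hr J).1)
      (fun J => mul_le_mul_of_nonneg_left (hr J).2 (pow_nonneg hq0.le J)) ?_
    simpa using (tendsto_pow_atTop_nhds_zero_of_lt_one hq0.le hq1).mul_const (n / (1 - q))
  have hpartial := fun J => sum_greedyDigit_add_remainder (n := n) (x := x) hq0.ne' J
  simpa [← eq_sub_iff_add_eq.mpr (hpartial _)] using htail.const_sub x

end GreedyExpansion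

theorem mgSeq_divModEquiv_symm (m : ℕ) (k : Fin (m + 1) → ℝ) (q : ℝ) (p : ℕ × Fin (m + 1)) :
    mgSeq m k q ((Nat.divModEquiv (m + 1)).symm p) = k p.2 * q ^ p.1 := by
  obtain ⟨j, i⟩ := p
  have hmod : (j * (m + 1) + i) % (m + 1) = i := by
    rw [Nat.mul_add_mod_self_right, Nat.mod_eq_of_lt i.is_lt]
  have hdiv : (j * (m + 1) + i) / (m + 1) = j := by
    rw [add_comm, Nat.add_mul_div_right _ _ m.succ_pos, Nat.div_eq_of_lt i.is_lt, zero_add]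
  simp [mgSeq, hmod, hdiv]

theorem tsum_mem_achievementSet_mgSeq {m : ℕ} {k : Fin (m + 1) → ℝ} {q : ℝ} (hq0 : 0 ≤ q)
    (hq1 : q < 1) (ε : ℕ → Fin (m + 1) → Bool) :
    ∑' j, (∑ i, if ε j i then k i else 0) * q ^ j ∈ achievementSet (mgSeq m k q) := by
  set g : ℕ × Fin (m + 1) → ℝ := fun p => if ε p.1 p.2 then k p.2 * q ^ p.1 else 0
  have hg : Summable g := by
    refine Summable.of_norm_bounded ((summable_geometric_of_lt_one hq0 hq1).mul_of_nonneg
      (Summable.of_finite (f := fun i => ‖k i‖)) (fun j => pow_nonneg hq0 j)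
      (fun i => norm_nonneg _)) fun p => ?_
    simp only [g]
    split_ifs
    · rw [norm_mul, norm_pow, Real.norm_of_nonneg hq0, mul_comm]
    · simp only [norm_zero]; positivity
  set A := Nat.divModEquiv (m + 1) ⁻¹' {p | ε p.1 p.2}
  have hA : ∀ p, A.indicator (mgSeq m k q) ((Nat.divModEquiv (m + 1)).symm p) = g p := fun p => by
    classical
    rw [Set.indicator_apply, mgSeq_divModEquiv_symm]
    simp only [A, mem_preimage, Equiv.apply_symm_apply, mem_ofPred_eq, g]
  refine ⟨A, ?_⟩
  calc ∑' j, (∑ i, if ε j i then k i else 0) * q ^ j = ∑' j, ∑' i, g (j, i) :=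
        tsum_congr fun j => by simp [tsum_fintype, Finset.sum_mul, g]
    _ = ∑' p, g p := (hg.tsum_prod' fun _ => .of_finite).symm
    _ = ∑' p, A.indicator (mgSeq m k q) ((Nat.divModEquiv (m + 1)).symm p) :=
        tsum_congr fun p => (hA p).symm
    _ = ∑' t, A.indicator (mgSeq m k q) t := (Nat.divModEquiv (m + 1)).symm.tsum_eq _

theorem Icc_subset_achievementSet_mgSeq {m : ℕ} {k : Fin (m + 1) → ℕ} {n₀ n : ℕ}
    (hsum : ∀ j ≤ n, ∃ ε : Fin (m + 1) → Bool, n₀ + j = ∑ i, if ε i then k i else 0)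
    {q : ℝ} (hq0 : 0 < q) (hqn : 1 ≤ (n + 1) * q) (hq1 : q < 1) :
    Icc (n₀ / (1 - q)) ((n₀ + n) / (1 - q)) ⊆ achievementSet (mgSeq m (fun i => k i) q) := by
  intro y hy
  set x := y - n₀ / (1 - q) with hxdef
  have hx : x ∈ Icc 0 (n / (1 - q)) := ⟨by linarith [hy.1], by rw [add_div] at hy; linarith [hy.2]⟩
  set d := fun j => greedyDigit n (greedyRemainder n q x j)
  choose ε hε using fun j => hsum (d j) (min_le_left _ _)
  have hblock : ∀ j, (∑ i, if ε j i then (k i : ℝ) else 0) = n₀ + d j := fun j => by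
    exact_mod_cast (hε j).symm
  have hy' : HasSum (fun j => (n₀ + d j : ℝ) * q ^ j) (n₀ * (1 - q)⁻¹ + x) := by
    simpa only [add_mul] using ((hasSum_geometric_of_lt_one hq0.le hq1).mul_left (n₀ : ℝ)).add
      (hasSum_greedyDigit hq0 hqn hq1 hx)
  have hmem := tsum_mem_achievementSet_mgSeq (k := fun i => (k i : ℝ)) hq0.le hq1 ε
  rwa [tsum_congr fun j => by rw [hblock j], hy'.tsum_eq, hxdef, div_eq_mul_inv,
    add_sub_cancel] at hmem

theorem stmt9_general (m : ℕ) (k : Fin (m + 1) → ℕ)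
    (n₀ n : ℕ) (hn : 0 < n)
    (hsum : ∀ j ≤ n, ∃ ε : Fin (m + 1) → Bool,
      n₀ + j = ∑ i, if ε i then k i else 0)
    (q : ℝ) (hq1 : 1 / (n + 1 : ℝ) ≤ q) (hq2 : q < 1 / 2) :
    (interior (achievementSet (mgSeq m (fun i => (k i : ℝ)) q))).Nonempty := by
  have hq0 : 0 < q := lt_of_lt_of_le (by positivity) hq1
  have hqn : 1 ≤ ((n : ℝ) + 1) * q := by rwa [div_le_iff₀' (by positivity)] at hq1
  have hlt : (n₀ : ℝ) / (1 - q) < (n₀ + n) / (1 - q) := by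
    gcongr
    · linarith
    · exact_mod_cast Nat.lt_add_of_pos_right hn
  have hIoo := interior_mono (Icc_subset_achievementSet_mgSeq hsum hq0 hqn (by linarith))
  rw [interior_Icc] at hIoo
  exact (nonempty_Ioo.mpr hlt).mono hIoo

theorem stmt9 (m : ℕ) (k : Fin (m + 1) → ℕ) (hpos : ∀ i, 0 < k i)
    (n₀ n : ℕ) (hn₀ : 0 < n₀) (hn : 0 < n)
    (hsum : ∀ j ≤ n, ∃ ε : Fin (m + 1) → Bool,
      n₀ + j = ∑ i, if ε i then k i else 0)
    (q : ℝ) (hq1 : 1 / (n + 1 : ℝ) ≤ q) (hq2 : q < 1 / 2) :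
    (interior (achievementSet (mgSeq m (fun i => (k i : ℝ)) q))).Nonempty :=
  stmt9_general m k n₀ n hn hsum q hq1 hq2
end

section
/- Let k₁,…,k_m be positive integers and q ∈ (0,1). Suppose n₀, n are positive integers such that each of n₀, n₀+1, …, n₀+n is a subset-sum of {k₁,…,k_m}. Then n₀/(1-q) + E(y) ⊆ E(k₁,…,k_m; q), where y is the sequence with each power q^j repeated n times. -/
open Set

/-!
Index both sequences in blocks: the terms `j * N + r`, `r < N`, of a multigeometric sequence
`(c 0, …, c (N-1); q)` are `c r * q ^ j`. A set `A` of indices of `y` meets block `j` in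
`a j ≤ n` indices, so it sums to `∑ a j * q ^ j`. By hypothesis `n₀ + a j` is a subset-sum of the
`k i`; choosing those digits in block `j` of `(k; q)` gives
`∑ (n₀ + a j) * q ^ j = n₀ / (1 - q) + ∑ a j * q ^ j`.
-/

theorem Nat.mul_add_div_of_lt {N j r : ℕ} (hr : r < N) : (j * N + r) / N = j := by
  rw [Nat.mul_comm, Nat.mul_add_div (by omega), Nat.div_eq_of_lt hr, Nat.add_zero]

def IsMultigeometric (N : ℕ) (c : Fin N → ℝ) (q : ℝ) (x : ℕ → ℝ) : Prop :=
  ∀ j (r : Fin N), x (j * N + r) = c r * q ^ j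

theorem isMultigeometric_mgSeq (m : ℕ) (k : Fin (m + 1) → ℝ) (q : ℝ) :
    IsMultigeometric (m + 1) k q (mgSeq m k q) := by
  intro j r
  rw [mgSeq, Nat.mul_add_div_of_lt r.is_lt]
  congr
  exact Nat.mul_add_mod_of_lt r.is_lt

section Multigeometric

open Finset

variable {N : ℕ} [NeZero N]

theorem Nat.divModEquiv_mul_add (j : ℕ) (r : Fin N) : Nat.divModEquiv N (j * N + r) = (j, r) :=
  (Nat.divModEquiv N).apply_symm_apply (j, r)

theorem tsum_eq_tsum_sum_fin_mul_add {α : Type*} [AddCommMonoid α] [TopologicalSpace α]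
    [ContinuousAdd α] [T3Space α] {f : ℕ → α} (hf : Summable f) :
    ∑' i, f i = ∑' j, ∑ r : Fin N, f (j * N + r) := by
  have hfe : Summable fun p : ℕ × Fin N => f ((Nat.divModEquiv N).symm p) :=
    (Nat.divModEquiv N).symm.summable_iff.mpr hf
  rw [← (Nat.divModEquiv N).symm.tsum_eq f, hfe.tsum_prod' fun _ => Summable.of_finite]
  simp [tsum_fintype]

namespace IsMultigeometric

variable {x : ℕ → ℝ} {c : Fin N → ℝ} {q : ℝ}

theorem summable (hx : IsMultigeometric N c q x) (hc : 0 ≤ c) (hq0 : 0 ≤ q) (hq1 : q < 1) :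
    Summable x := by
  have hxe : x ∘ (Nat.divModEquiv N).symm = fun p => q ^ p.1 * c p.2 := by
    funext p
    rw [Function.comp_apply, Nat.divModEquiv_symm_apply, hx, mul_comm]
  rw [← (Nat.divModEquiv N).symm.summable_iff, hxe]
  exact (summable_geometric_of_lt_one hq0 hq1).mul_of_nonneg Summable.of_finite
    (fun _ => pow_nonneg hq0 _) hc

theorem tsum_indicator (hx : IsMultigeometric N c q x) (hc : 0 ≤ c) (hq0 : 0 ≤ q) (hq1 : q < 1)
    (A : Set ℕ) [DecidablePred (· ∈ A)] :
    ∑' i, A.indicator x i = ∑' j, (∑ r ∈ ({r | j * N + r ∈ A} : Finset (Fin N)), c r) * q ^ j := by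
  rw [tsum_eq_tsum_sum_fin_mul_add (N := N) ((hx.summable hc hq0 hq1).indicator A)]
  refine tsum_congr fun j => ?_
  rw [sum_filter, sum_mul]
  congr with r
  split_ifs with h <;> simp [h, hx j r]

theorem tsum_sum_mul_pow_mem_achievementSet (hx : IsMultigeometric N c q x) (hc : 0 ≤ c)
    (hq0 : 0 ≤ q) (hq1 : q < 1) (S : ℕ → Finset (Fin N)) :
    ∑' j, (∑ r ∈ S j, c r) * q ^ j ∈ achievementSet x := by
  classical
  refine ⟨{i | (Nat.divModEquiv N i).2 ∈ S (Nat.divModEquiv N i).1}, ?_⟩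
  rw [hx.tsum_indicator hc hq0 hq1]
  refine tsum_congr fun j => ?_
  congr 2
  ext r
  simp only [Finset.mem_filter, Finset.mem_univ, true_and, Set.mem_ofPred_eq,
    Nat.divModEquiv_mul_add]

end IsMultigeometric

end Multigeometric

open Finset in
theorem stmt11_general (m : ℕ) (k : Fin (m + 1) → ℕ)
    (q : ℝ) (hq0 : 0 < q) (hq1 : q < 1)
    (n₀ n : ℕ) (hn : 0 < n)
    (hsum : ∀ j ≤ n, ∃ ε : Fin (m + 1) → Bool,
      n₀ + j = ∑ i, if ε i then k i else 0) :
    (fun t => (n₀ : ℝ) / (1 - q) + t) '' achievementSet (fun i => q ^ (i / n)) ⊆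
      achievementSet (mgSeq m (fun i => (k i : ℝ)) q) := by
  classical
  have : NeZero n := ⟨hn.ne'⟩
  rintro _ ⟨_, ⟨A, rfl⟩, rfl⟩
  set a : ℕ → ℕ := fun j => #{r : Fin n | j * n + r ∈ A}
  have ha : ∀ j, a j ≤ n := fun j => (card_filter_le _ _).trans (by simp)
  choose ε hε using fun j => hsum (a j) (ha j)
  have hy : ∑' i, A.indicator (fun i => q ^ (i / n)) i = ∑' j, (a j : ℝ) * q ^ j := by
    have hgeom : IsMultigeometric n 1 q fun i => q ^ (i / n) := fun j r => by
      simp only [Nat.mul_add_div_of_lt r.is_lt, Pi.one_apply, one_mul]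
    simp [hgeom.tsum_indicator zero_le_one hq0.le hq1, a]
  have hk : ∀ j, (n₀ : ℝ) + a j = ∑ r with ε j r, (k r : ℝ) := fun j => by
    rw [sum_filter]
    exact_mod_cast hε j
  have ha_summable : Summable fun j => (a j : ℝ) * q ^ j :=
    Summable.of_nonneg_of_le (fun j => by positivity)
      (fun j => mul_le_mul_of_nonneg_right (Nat.cast_le.mpr (ha j)) (by positivity))
      ((summable_geometric_of_lt_one hq0.le hq1).mul_left (n : ℝ))
  convert (isMultigeometric_mgSeq m _ q).tsum_sum_mul_pow_mem_achievementSet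
    (fun r => Nat.cast_nonneg (k r)) hq0.le hq1 (fun j => {r | ε j r}) using 1
  simp_rw [← hk, add_mul]
  rw [hy, ((summable_geometric_of_lt_one hq0.le hq1).mul_left _).tsum_add ha_summable,
    tsum_mul_left, tsum_geometric_of_lt_one hq0.le hq1, div_eq_mul_inv]

theorem stmt11 (m : ℕ) (k : Fin (m + 1) → ℕ) (hpos : ∀ i, 0 < k i)
    (q : ℝ) (hq0 : 0 < q) (hq1 : q < 1)
    (n₀ n : ℕ) (hn₀ : 0 < n₀) (hn : 0 < n)
    (hsum : ∀ j ≤ n, ∃ ε : Fin (m + 1) → Bool,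
      n₀ + j = ∑ i, if ε i then k i else 0) :
    (fun t => (n₀ : ℝ) / (1 - q) + t) '' achievementSet (fun i => q ^ (i / n)) ⊆
      achievementSet (mgSeq m (fun i => (k i : ℝ)) q) :=
  stmt11_general m k q hq0 hq1 n₀ n hn hsum
end

section
/- For q = 1/10 and the sequence a_q = (8,7,6,5,4; q) (Weinstein–Shapiro, rescaled), the achievement set E(a_q) has nonempty interior but is not a finite union of closed intervals. -/
open Set

/-!
Grouping the terms of `mgSeq m k q` in blocks of `m + 1` identifies its achievement set with the
set of sums `∑ σⱼ qʲ` in which every `σⱼ` is a subset sum of `k`.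

The subset sums of `(8, 7, 6, 5, 4)` include `4 + d` for every decimal digit `d`, so for `q = 1/10`
these sums contain `40/9 + ∑ dⱼ 10⁻ʲ` for every digit sequence, hence a whole interval.

With `K = ∑ k` and `κ ≤ min k`, a sum with `σⱼ ≠ K` for some `j ≤ n` is at most `K/(1-q) - κ qⁿ`,
while one with `σⱼ = K` for all `j ≤ n` is at least `K/(1-q) · (1 - qⁿ⁺¹)`. If `K q < κ (1 - q)`
(here `3 < 3.6`) this leaves a gap just below each of these partial sums, which belong to the set
and increase to its maximum; a finite union of closed intervals cannot alternate infinitely often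
between points inside and outside it.
-/

theorem Summable.hasSum_sum_fin_mul_add {α : Type*} [AddCommMonoid α] [TopologicalSpace α]
    [ContinuousAdd α] [RegularSpace α] {f : ℕ → α} (hf : Summable f) (N : ℕ) [NeZero N] :
    HasSum (fun j ↦ ∑ r : Fin N, f (j * N + r)) (∑' n, f n) :=
  ((Nat.divModEquiv N).symm.hasSum_iff.mpr hf.hasSum).prod_fiberwise fun _ ↦ hasSum_fintype _

theorem not_isFinUnionClosedIntervals_of_alternating {S : Set ℝ} {p g : ℕ → ℝ}
    (hp : ∀ n, p n ∈ S) (hg : ∀ n, g n ∉ S) (hpg : ∀ n, p n ≤ g n) (hgp : ∀ n, g n ≤ p (n + 1)) :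
    ¬ IsFinUnionClosedIntervals S := by
  rintro ⟨N, a, b, rfl⟩
  have hmono : Monotone p := monotone_nat_of_le_succ fun n ↦ (hpg n).trans (hgp n)
  choose i hi using fun n ↦ mem_iUnion.mp (hp n)
  obtain ⟨n, n', hne, heq⟩ := Finite.exists_ne_map_eq_of_infinite i
  wlog hlt : n < n' generalizing n n'
  · exact this n' n hne.symm heq.symm (by omega)
  exact hg n <| mem_iUnion.mpr ⟨i n, (hi n).1.trans (hpg n),
    (hgp n).trans <| (hmono hlt).trans <| heq ▸ (hi n').2⟩

section mgSeq

variable {m : ℕ} {k : Fin (m + 1) → ℝ} {q : ℝ}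

theorem mgSeq_mul_add (j : ℕ) (r : Fin (m + 1)) : mgSeq m k q (j * (m + 1) + r) = k r * q ^ j := by
  have hmod : (j * (m + 1) + r) % (m + 1) = r := by simp [Nat.mod_eq_of_lt r.is_lt]
  have hdiv : (j * (m + 1) + r) / (m + 1) = j := by
    rw [add_comm, Nat.add_mul_div_right _ _ m.succ_pos, Nat.div_eq_of_lt r.is_lt, zero_add]
  simp only [mgSeq, hmod, hdiv]

theorem summable_mgSeq (hq : |q| < 1) : Summable (mgSeq m k q) := by
  rw [← (Nat.divModEquiv (m + 1)).symm.summable_iff]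
  have := summable_mul_of_summable_norm (f := k) (g := fun j : ℕ ↦ q ^ j)
    Summable.of_finite (summable_norm_geometric_of_norm_lt_one (by simpa using hq))
  refine ((Equiv.prodComm _ _).summable_iff.mpr this).congr fun ⟨j, r⟩ ↦ ?_
  exact (mgSeq_mul_add j r).symm

theorem achievementSet_mgSeq (hq : |q| < 1) :
    achievementSet (mgSeq m k q) =
      {y | ∃ F : ℕ → Finset (Fin (m + 1)), HasSum (fun j ↦ (∑ r ∈ F j, k r) * q ^ j) y} := by
  classical
  have hblock (A : Set ℕ) (F : ℕ → Finset (Fin (m + 1)))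
      (hF : ∀ j r, j * (m + 1) + ↑r ∈ A ↔ r ∈ F j) :
      HasSum (fun j ↦ (∑ r ∈ F j, k r) * q ^ j) (∑' n, A.indicator (mgSeq m k q) n) := by
    have hterm (j : ℕ) : (∑ r ∈ F j, k r) * q ^ j =
        ∑ r : Fin (m + 1), A.indicator (mgSeq m k q) (j * (m + 1) + r) := by
      simp only [Finset.sum_mul, indicator_apply, hF, mgSeq_mul_add]
      rw [Finset.sum_ite_mem, Finset.univ_inter]
    simpa only [hterm] using ((summable_mgSeq hq).indicator A).hasSum_sum_fin_mul_add (m + 1)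
  ext y
  constructor
  · rintro ⟨A, rfl⟩
    exact ⟨fun j ↦ {r | j * (m + 1) + ↑r ∈ A}, hblock A _ fun j r ↦ by simp⟩
  · rintro ⟨F, hy⟩
    refine ⟨Nat.divModEquiv (m + 1) ⁻¹' {p | p.2 ∈ F p.1}, hy.unique (hblock _ F fun j r ↦ ?_)⟩
    have : j * (m + 1) + ↑r = (Nat.divModEquiv (m + 1)).symm (j, r) := rfl
    rw [this, mem_preimage, Equiv.apply_symm_apply]
    exact Iff.rfl

theorem mul_sum_range_mem_achievementSet_mgSeq (hq : |q| < 1) (n : ℕ) :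
    (∑ r, k r) * ∑ j ∈ Finset.range n, q ^ j ∈ achievementSet (mgSeq m k q) := by
  classical
  rw [achievementSet_mgSeq hq, Finset.mul_sum]
  refine ⟨fun j ↦ if j < n then Finset.univ else ∅, ?_⟩
  convert hasSum_sum_of_ne_finset_zero (L := .unconditional ℕ) (s := Finset.range n)
    fun j hj ↦ ?_ using 2 with j hj
  · simp [Finset.mem_range.mp hj]
  · simp [Finset.mem_range.not.mp hj]

theorem sum_le_sub_of_ne_univ {κ : ℝ} (hκ : 0 ≤ κ) (hk : ∀ r, κ ≤ k r)
    {F : Finset (Fin (m + 1))} (hF : F ≠ Finset.univ) : ∑ r ∈ F, k r ≤ ∑ r, k r - κ := by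
  obtain ⟨r₀, -, hr₀⟩ := Finset.exists_of_ssubset (Finset.ssubset_univ_iff.mpr hF)
  have hsub : F ⊆ Finset.univ.erase r₀ := fun r hr ↦
    Finset.mem_erase.mpr ⟨ne_of_mem_of_not_mem hr hr₀, Finset.mem_univ r⟩
  calc ∑ r ∈ F, k r ≤ ∑ r ∈ Finset.univ.erase r₀, k r :=
        Finset.sum_le_sum_of_subset_of_nonneg hsub fun r _ _ ↦ hκ.trans (hk r)
    _ = ∑ r, k r - k r₀ := Finset.sum_erase_eq_sub (Finset.mem_univ r₀)
    _ ≤ ∑ r, k r - κ := by linarith [hk r₀]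

theorem le_of_mem_achievementSet_mgSeq_of_lt {κ : ℝ} (hκ : 0 ≤ κ) (hk : ∀ r, κ ≤ k r)
    (hq₀ : 0 ≤ q) (hq₁ : q < 1) {y : ℝ} (hy : y ∈ achievementSet (mgSeq m k q)) (n : ℕ)
    (hlt : (∑ r, k r) / (1 - q) - κ * q ^ n < y) :
    (∑ r, k r) / (1 - q) * (1 - q ^ (n + 1)) ≤ y := by
  classical
  rw [achievementSet_mgSeq (abs_lt.mpr ⟨by linarith, hq₁⟩)] at hy
  obtain ⟨F, hy⟩ := hy
  have hk₀ (r) : 0 ≤ k r := hκ.trans (hk r)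
  have hterm (j : ℕ) : (∑ r ∈ F j, k r) * q ^ j ≤ (∑ r, k r) * q ^ j :=
    mul_le_mul_of_nonneg_right
      (Finset.sum_le_sum_of_subset_of_nonneg (Finset.subset_univ _) fun r _ _ ↦ hk₀ r)
      (pow_nonneg hq₀ j)
  by_cases hfull : ∀ j ≤ n, F j = Finset.univ
  · calc (∑ r, k r) / (1 - q) * (1 - q ^ (n + 1))
      _ = ∑ j ∈ Finset.range (n + 1), (∑ r, k r) * q ^ j := by
          rw [← Finset.mul_sum, ← geom_sum_mul_neg]
          field_simp [(sub_pos.mpr hq₁).ne']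
      _ = ∑ j ∈ Finset.range (n + 1), (∑ r ∈ F j, k r) * q ^ j :=
          Finset.sum_congr rfl fun j hj ↦ by
            rw [hfull j (Nat.lt_succ_iff.mp (Finset.mem_range.mp hj))]
      _ ≤ y := sum_le_hasSum _ (fun j _ ↦ mul_nonneg (Finset.sum_nonneg fun r _ ↦ hk₀ r)
          (pow_nonneg hq₀ j)) hy
  · push Not at hfull
    obtain ⟨j, hjn, hj⟩ := hfull
    have hbound : HasSum (fun i ↦ (∑ r, k r) * q ^ i - if i = j then κ * q ^ j else 0)
        ((∑ r, k r) * (1 - q)⁻¹ - κ * q ^ j) :=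
      ((hasSum_geometric_of_lt_one hq₀ hq₁).mul_left _).sub (hasSum_ite_eq j _)
    have hle (i : ℕ) :
        (∑ r ∈ F i, k r) * q ^ i ≤ (∑ r, k r) * q ^ i - if i = j then κ * q ^ j else 0 := by
      by_cases hij : i = j
      · subst hij
        rw [if_pos rfl]
        linarith [mul_le_mul_of_nonneg_right (sum_le_sub_of_ne_univ hκ hk hj) (pow_nonneg hq₀ i)]
      · simpa only [hij, if_false, sub_zero] using hterm i
    have hyle := hasSum_le hle hy hbound
    have : κ * q ^ n ≤ κ * q ^ j :=
      mul_le_mul_of_nonneg_left (pow_le_pow_of_le_one hq₀ hq₁.le hjn) hκ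
    rw [← div_eq_mul_inv] at hyle
    linarith

theorem Icc_subset_achievementSet_mgSeq_s14 {b : ℕ} (hb : 1 < b) {c : ℝ}
    (hdigit : ∀ d : Fin b, ∃ F : Finset (Fin (m + 1)), ∑ r ∈ F, k r = c + d) :
    Icc (c * b / (b - 1)) (c * b / (b - 1) + b) ⊆ achievementSet (mgSeq m k (b : ℝ)⁻¹) := by
  intro y ⟨hy₀, hy₁⟩
  have hb₁ : (1 : ℝ) < b := by exact_mod_cast hb
  have hb₀ : (0 : ℝ) < b := one_pos.trans hb₁
  have hz : (y - c * b / (b - 1)) / b ∈ Icc (0 : ℝ) 1 :=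
    ⟨div_nonneg (by linarith) hb₀.le, (div_le_one hb₀).mpr (by linarith)⟩
  obtain ⟨d, -, hd⟩ := Real.ofDigits_SurjOn hb hz
  choose F hF using hdigit
  rw [achievementSet_mgSeq (by rw [abs_inv, Nat.abs_cast]; exact inv_lt_one_of_one_lt₀ hb₁)]
  refine ⟨F ∘ d, ?_⟩
  have hgeom := (hasSum_geometric_of_lt_one (inv_nonneg.mpr hb₀.le)
    (inv_lt_one_of_one_lt₀ hb₁)).mul_left c
  have hdigits : HasSum (fun j ↦ b * Real.ofDigitsTerm d j) (b * Real.ofDigits d) :=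
    Real.summable_ofDigitsTerm.hasSum.mul_left _
  have hy : c * (1 - (b : ℝ)⁻¹)⁻¹ + b * Real.ofDigits d = y := by
    rw [hd]
    field_simp
    ring
  refine (hy ▸ hgeom.add hdigits).congr_fun fun j ↦ ?_
  simp only [Function.comp_apply, hF, Real.ofDigitsTerm, inv_pow, pow_succ]
  field_simp

theorem not_isFinUnionClosedIntervals_achievementSet_mgSeq {κ : ℝ} (hκ : 0 ≤ κ)
    (hk : ∀ r, κ ≤ k r) (hq₀ : 0 < q) (hq₁ : q < 1) (hgap : (∑ r, k r) * q < κ * (1 - q)) :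
    ¬ IsFinUnionClosedIntervals (achievementSet (mgSeq m k q)) := by
  set M := (∑ r, k r) / (1 - q) with hM
  have h1q : 0 < 1 - q := sub_pos.mpr hq₁
  have hMq : M * q < κ := by
    rw [div_mul_eq_mul_div, div_lt_iff₀ h1q]
    exact hgap
  have hκM : κ ≤ M := by
    rw [le_div_iff₀ h1q]
    linarith [hk 0, Finset.single_le_sum (fun r _ ↦ hκ.trans (hk r)) (Finset.mem_univ 0),
      mul_nonneg hκ hq₀.le]
  -- `M - c qⁿ⁺¹` then lies in the gap `(M - κ qⁿ⁺¹, M - M qⁿ⁺²)`.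
  obtain ⟨c, hMqc, hcκ⟩ := exists_between hMq
  refine not_isFinUnionClosedIntervals_of_alternating (p := fun n ↦ M * (1 - q ^ (n + 1)))
    (g := fun n ↦ M - c * q ^ (n + 1)) (fun n ↦ ?_) (fun n hg ↦ ?_) (fun n ↦ ?_) (fun n ↦ ?_)
  · convert mul_sum_range_mem_achievementSet_mgSeq (k := k) (abs_lt.mpr ⟨by linarith, hq₁⟩)
      (n + 1) using 1
    rw [← geom_sum_mul_neg, hM]
    field_simp
  all_goals have hpos : 0 < q ^ (n + 1) := pow_pos hq₀ _
  · have := le_of_mem_achievementSet_mgSeq_of_lt hκ hk hq₀.le hq₁ hg (n + 1)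
      (by linarith [mul_lt_mul_of_pos_right hcκ hpos])
    rw [← hM, pow_succ] at this
    linarith [mul_lt_mul_of_pos_right hMqc hpos]
  · linarith [mul_le_mul_of_nonneg_right (hcκ.le.trans hκM) hpos.le]
  · rw [pow_succ _ (n + 1)]
    linarith [mul_le_mul_of_nonneg_right hMqc.le hpos.le]

end mgSeq

theorem stmt14 :
    (interior (achievementSet (mgSeq 4 ![8, 7, 6, 5, 4] (1 / 10)))).Nonempty ∧
    ¬ IsFinUnionClosedIntervals (achievementSet (mgSeq 4 ![8, 7, 6, 5, 4] (1 / 10))) := by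
  refine ⟨?_, not_isFinUnionClosedIntervals_achievementSet_mgSeq (κ := 4) (by norm_num)
    (fun r ↦ by fin_cases r <;> norm_num) (by norm_num) (by norm_num)
    (by simp [Fin.sum_univ_five]; norm_num)⟩
  have hdigit (d : Fin 10) :
      ∃ F : Finset (Fin 5), ∑ r ∈ F, (![8, 7, 6, 5, 4] : Fin 5 → ℝ) r = 4 + d := by
    fin_cases d
    exacts [⟨{4}, by simp⟩, ⟨{3}, by simp; norm_num⟩, ⟨{2}, by simp; norm_num⟩,
      ⟨{1}, by simp; norm_num⟩, ⟨{0}, by simp; norm_num⟩, ⟨{3, 4}, by simp; norm_num⟩,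
      ⟨{2, 4}, by simp; norm_num⟩, ⟨{1, 4}, by simp; norm_num⟩, ⟨{0, 4}, by simp; norm_num⟩,
      ⟨{0, 3}, by simp; norm_num⟩]
  have hsub := interior_mono (Icc_subset_achievementSet_mgSeq_s14 (by norm_num : 1 < 10) hdigit)
  rw [interior_Icc, Nat.cast_ofNat, ← one_div] at hsub
  exact (nonempty_Ioo.mpr (by norm_num)).mono hsub
end
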